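/- Let R be a ring, n ≥ 1, M a free right R-module of rank n (M ≅ Rⁿ), W = End_R(M), and α an anti-endomorphism of W. Then the direct sum of n copies of the right R-module (K_α)₁ (that is, K_α regarded as a right R-module via •₁) is isomorphic to the free right R-module Rⁿ. -/

import Mathlib

open MulOpposite TensorProduct Function

universe u v w v'

section Core

/-- An anti-endomorphism of a ring: additive, unital, reverses multiplication. -/
def IsAntiEndo {W : Type*} [Ring W] (α : W → W) : Prop :=
  (∀ u v : W, α (u + v) = α u + α v) ∧ α 1 = 1 ∧ ∀ u v : W, α (u * v) = α v * α u

/-- An anti-automorphism of a ring: a bijective anti-endomorphism. -/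
def IsAntiAuto {W : Type*} [Ring W] (α : W → W) : Prop :=
  IsAntiEndo α ∧ Function.Bijective α

/-- An inner automorphism of a ring: conjugation by a unit. -/
def IsInnerAut {W : Type*} [Ring W] (φ : W → W) : Prop :=
  ∃ u : Wˣ, ∀ w : W, φ w = ↑u * w * ↑u⁻¹

variable (R : Type u) [Ring R]

/-- A double `R`-module structure on the additive group `K`: two commuting
right `R`-module structures `m0` and `m1`. -/
structure DoubleModule (K : Type v) [AddCommGroup K] where
  m0 : K → R → K
  m1 : K → R → K
  m0_add_left : ∀ (k k' : K) (r : R), m0 (k + k') r = m0 k r + m0 k' r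
  m0_add_right : ∀ (k : K) (r r' : R), m0 k (r + r') = m0 k r + m0 k r'
  m0_mul : ∀ (k : K) (r r' : R), m0 k (r * r') = m0 (m0 k r) r'
  m0_one : ∀ k : K, m0 k 1 = k
  m1_add_left : ∀ (k k' : K) (r : R), m1 (k + k') r = m1 k r + m1 k' r
  m1_add_right : ∀ (k : K) (r r' : R), m1 k (r + r') = m1 k r + m1 k r'
  m1_mul : ∀ (k : K) (r r' : R), m1 k (r * r') = m1 (m1 k r) r'
  m1_one : ∀ k : K, m1 k 1 = k
  comm : ∀ (k : K) (a b : R), m1 (m0 k a) b = m0 (m1 k b) a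

variable {R}

/-- A homomorphism of double `R`-modules. -/
def IsDoubleHom {K : Type v} {K' : Type w} [AddCommGroup K] [AddCommGroup K']
    (DK : DoubleModule R K) (DK' : DoubleModule R K') (f : K → K') : Prop :=
  (∀ k k' : K, f (k + k') = f k + f k') ∧
  (∀ (k : K) (r : R), f (DK.m0 k r) = DK'.m0 (f k) r) ∧
  (∀ (k : K) (r : R), f (DK.m1 k r) = DK'.m1 (f k) r)

/-- An isomorphism of double `R`-modules. -/
def IsDoubleIso {K : Type v} {K' : Type w} [AddCommGroup K] [AddCommGroup K']
    (DK : DoubleModule R K) (DK' : DoubleModule R K') (f : K → K') : Prop :=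
  IsDoubleHom DK DK' f ∧ Function.Bijective f

/-- An anti-automorphism of a double `R`-module: an additive bijection exchanging
the two module structures. -/
def IsDoubleAntiAuto {K : Type v} [AddCommGroup K] (DK : DoubleModule R K) (θ : K → K) : Prop :=
  Function.Bijective θ ∧ (∀ k k' : K, θ (k + k') = θ k + θ k') ∧
  (∀ (k : K) (r : R), θ (DK.m0 k r) = DK.m1 (θ k) r) ∧
  (∀ (k : K) (r : R), θ (DK.m1 k r) = DK.m0 (θ k) r)

variable (R)

/-- A general bilinear form on a right `R`-module `M` (encoded as a module over `Rᵐᵒᵖ`)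
with values in a double `R`-module `(K, DK)`. -/
structure GBF (M : Type v) [AddCommGroup M] [Module Rᵐᵒᵖ M]
    (K : Type w) [AddCommGroup K] (DK : DoubleModule R K) where
  b : M → M → K
  add_left : ∀ x x' y : M, b (x + x') y = b x y + b x' y
  add_right : ∀ x y y' : M, b x (y + y') = b x y + b x y'
  smul_left : ∀ (x y : M) (r : R), b (op r • x) y = DK.m0 (b x y) r
  smul_right : ∀ (x y : M) (r : R), b x (op r • y) = DK.m1 (b x y) r

variable {R}

namespace GBF

variable {M : Type v} [AddCommGroup M] [Module Rᵐᵒᵖ M]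
  {K : Type w} [AddCommGroup K] {DK : DoubleModule R K}

/-- The right adjoint of `β` is injective. -/
def RightInjective (β : GBF R M K DK) : Prop :=
  ∀ x x' : M, (∀ y : M, β.b y x = β.b y x') → x = x'

/-- The right adjoint of `β` is bijective onto `Hom_R(M, K₀)`. -/
def RightRegular (β : GBF R M K DK) : Prop :=
  β.RightInjective ∧
  ∀ f : M → K, (∀ y y' : M, f (y + y') = f y + f y') →
    (∀ (y : M) (r : R), f (op r • y) = DK.m0 (f y) r) →
    ∃ x : M, ∀ y : M, f y = β.b y x

/-- The left adjoint of `β` is injective. -/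
def LeftInjective (β : GBF R M K DK) : Prop :=
  ∀ x x' : M, (∀ y : M, β.b x y = β.b x' y) → x = x'

/-- The left adjoint of `β` is bijective onto `Hom_R(M, K₁)`. -/
def LeftRegular (β : GBF R M K DK) : Prop :=
  β.LeftInjective ∧
  ∀ f : M → K, (∀ y y' : M, f (y + y') = f y + f y') →
    (∀ (y : M) (r : R), f (op r • y) = DK.m1 (f y) r) →
    ∃ x : M, ∀ y : M, f y = β.b x y

/-- `α` is an adjoint anti-endomorphism for `β`: `β(w x, y) = β(x, α(w) y)`. -/
def IsAdjoint (β : GBF R M K DK) (α : Module.End Rᵐᵒᵖ M → Module.End Rᵐᵒᵖ M) : Prop :=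
  ∀ (w : Module.End Rᵐᵒᵖ M) (x y : M), β.b (w x) y = β.b x (α w y)

/-- Similarity of general bilinear forms on the same module. -/
def Similar {K' : Type v'} [AddCommGroup K'] {DK' : DoubleModule R K'}
    (β : GBF R M K DK) (β' : GBF R M K' DK') : Prop :=
  ∃ f : K → K', IsDoubleIso DK DK' f ∧ ∀ x y : M, β'.b x y = f (β.b x y)

end GBF

section Kalpha

variable {M : Type v} [AddCommGroup M] [Module Rᵐᵒᵖ M]

/-- The subgroup of `M ⊗_ℤ M` generated by the elements `(w x) ⊗ y - x ⊗ (α w y)`. -/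
def kalphaRel (α : Module.End Rᵐᵒᵖ M → Module.End Rᵐᵒᵖ M) : Submodule ℤ (M ⊗[ℤ] M) :=
  Submodule.span ℤ
    {z | ∃ (w : Module.End Rᵐᵒᵖ M) (x y : M), z = (w x) ⊗ₜ[ℤ] y - x ⊗ₜ[ℤ] (α w y)}

/-- `K_α`, the quotient of `M ⊗_ℤ M` by the relations `(w x) ⊗ y = x ⊗ (α w y)`. -/
abbrev Kalpha (α : Module.End Rᵐᵒᵖ M → Module.End Rᵐᵒᵖ M) : Type _ :=
  (M ⊗[ℤ] M) ⧸ kalphaRel α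

/-- The map `x ⊗ y ↦ (x·r) ⊗ y` on `M ⊗_ℤ M`. -/
noncomputable def smulLeftMap (r : R) : (M ⊗[ℤ] M) →ₗ[ℤ] (M ⊗[ℤ] M) :=
  TensorProduct.map ((DistribMulAction.toAddMonoidHom M (op r : Rᵐᵒᵖ)).toIntLinearMap)
    LinearMap.id

/-- The map `x ⊗ y ↦ x ⊗ (y·r)` on `M ⊗_ℤ M`. -/
noncomputable def smulRightMap (r : R) : (M ⊗[ℤ] M) →ₗ[ℤ] (M ⊗[ℤ] M) :=
  TensorProduct.map LinearMap.id
    ((DistribMulAction.toAddMonoidHom M (op r : Rᵐᵒᵖ)).toIntLinearMap)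

theorem kalphaRel_le_left (α : Module.End Rᵐᵒᵖ M → Module.End Rᵐᵒᵖ M) (r : R) :
    kalphaRel α ≤ (kalphaRel α).comap (smulLeftMap (M := M) r) := by
  rw [kalphaRel, Submodule.span_le]
  rintro _ ⟨w, x, y, rfl⟩
  rw [SetLike.mem_coe, Submodule.mem_comap, map_sub]
  have h1 : smulLeftMap (M := M) r ((w x) ⊗ₜ[ℤ] y) = (w (op r • x)) ⊗ₜ[ℤ] y := by
    show (op r • w x) ⊗ₜ[ℤ] y = _
    rw [map_smul]
  have h2 : smulLeftMap (M := M) r (x ⊗ₜ[ℤ] (α w y)) = (op r • x) ⊗ₜ[ℤ] (α w y) := by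
    rfl
  rw [h1, h2]
  exact Submodule.subset_span ⟨w, op r • x, y, rfl⟩

theorem kalphaRel_le_right (α : Module.End Rᵐᵒᵖ M → Module.End Rᵐᵒᵖ M) (r : R) :
    kalphaRel α ≤ (kalphaRel α).comap (smulRightMap (M := M) r) := by
  rw [kalphaRel, Submodule.span_le]
  rintro _ ⟨w, x, y, rfl⟩
  rw [SetLike.mem_coe, Submodule.mem_comap, map_sub]
  have h1 : smulRightMap (M := M) r ((w x) ⊗ₜ[ℤ] y) = (w x) ⊗ₜ[ℤ] (op r • y) := by
    rfl
  have h2 : smulRightMap (M := M) r (x ⊗ₜ[ℤ] (α w y)) = x ⊗ₜ[ℤ] (α w (op r • y)) := by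
    show x ⊗ₜ[ℤ] (op r • α w y) = _
    rw [map_smul]
  rw [h1, h2]
  exact Submodule.subset_span ⟨w, x, op r • y, rfl⟩

/-- The `m0`-action on `K_α`. -/
noncomputable def kSmul0 (α : Module.End Rᵐᵒᵖ M → Module.End Rᵐᵒᵖ M) (r : R) :
    Kalpha α →ₗ[ℤ] Kalpha α :=
  Submodule.mapQ _ _ (smulLeftMap r) (kalphaRel_le_left α r)

/-- The `m1`-action on `K_α`. -/
noncomputable def kSmul1 (α : Module.End Rᵐᵒᵖ M → Module.End Rᵐᵒᵖ M) (r : R) :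
    Kalpha α →ₗ[ℤ] Kalpha α :=
  Submodule.mapQ _ _ (smulRightMap r) (kalphaRel_le_right α r)

theorem kSmul0_mk (α : Module.End Rᵐᵒᵖ M → Module.End Rᵐᵒᵖ M) (r : R) (t : M ⊗[ℤ] M) :
    kSmul0 α r (Submodule.Quotient.mk t) = Submodule.Quotient.mk (smulLeftMap r t) := rfl

theorem kSmul1_mk (α : Module.End Rᵐᵒᵖ M → Module.End Rᵐᵒᵖ M) (r : R) (t : M ⊗[ℤ] M) :
    kSmul1 α r (Submodule.Quotient.mk t) = Submodule.Quotient.mk (smulRightMap r t) := rfl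

/-- The double `R`-module structure on `K_α`. -/
noncomputable def KalphaDM (α : Module.End Rᵐᵒᵖ M → Module.End Rᵐᵒᵖ M) :
    DoubleModule R (Kalpha α) where
  m0 k r := kSmul0 α r k
  m1 k r := kSmul1 α r k
  m0_add_left k k' r := map_add _ k k'
  m0_add_right := by
    intro k r r'
    induction k using Submodule.Quotient.induction_on with
    | _ t =>
      rw [kSmul0_mk, kSmul0_mk, kSmul0_mk, ← Submodule.Quotient.mk_add]
      congr 1
      induction t with
      | zero => simp
      | tmul x y =>
          show (op (r + r') • x) ⊗ₜ[ℤ] y = (op r • x) ⊗ₜ[ℤ] y + (op r' • x) ⊗ₜ[ℤ] y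
          simp [op_add, add_smul, TensorProduct.add_tmul]
      | add a b ha hb => rw [map_add, map_add, map_add, ha, hb]; abel
  m0_mul := by
    intro k r r'
    induction k using Submodule.Quotient.induction_on with
    | _ t =>
      rw [kSmul0_mk, kSmul0_mk, kSmul0_mk]
      congr 1
      induction t with
      | zero => simp
      | tmul x y =>
          show (op (r * r') • x) ⊗ₜ[ℤ] y = (op r' • op r • x) ⊗ₜ[ℤ] y
          simp [op_mul, mul_smul]
      | add a b ha hb => rw [map_add, map_add, map_add, ha, hb]
  m0_one := by
    intro k
    induction k using Submodule.Quotient.induction_on with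
    | _ t =>
      rw [kSmul0_mk]
      congr 1
      induction t with
      | zero => simp
      | tmul x y =>
          show (op (1 : R) • x) ⊗ₜ[ℤ] y = x ⊗ₜ[ℤ] y
          simp
      | add a b ha hb => rw [map_add, ha, hb]
  m1_add_left k k' r := map_add _ k k'
  m1_add_right := by
    intro k r r'
    induction k using Submodule.Quotient.induction_on with
    | _ t =>
      rw [kSmul1_mk, kSmul1_mk, kSmul1_mk, ← Submodule.Quotient.mk_add]
      congr 1
      induction t with
      | zero => simp
      | tmul x y =>
          show x ⊗ₜ[ℤ] (op (r + r') • y) = x ⊗ₜ[ℤ] (op r • y) + x ⊗ₜ[ℤ] (op r' • y)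
          simp [op_add, add_smul, TensorProduct.tmul_add]
      | add a b ha hb => rw [map_add, map_add, map_add, ha, hb]; abel
  m1_mul := by
    intro k r r'
    induction k using Submodule.Quotient.induction_on with
    | _ t =>
      rw [kSmul1_mk, kSmul1_mk, kSmul1_mk]
      congr 1
      induction t with
      | zero => simp
      | tmul x y =>
          show x ⊗ₜ[ℤ] (op (r * r') • y) = x ⊗ₜ[ℤ] (op r' • op r • y)
          simp [op_mul, mul_smul]
      | add a b ha hb => rw [map_add, map_add, map_add, ha, hb]
  m1_one := by
    intro k
    induction k using Submodule.Quotient.induction_on with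
    | _ t =>
      rw [kSmul1_mk]
      congr 1
      induction t with
      | zero => simp
      | tmul x y =>
          show x ⊗ₜ[ℤ] (op (1 : R) • y) = x ⊗ₜ[ℤ] y
          simp
      | add a b ha hb => rw [map_add, ha, hb]
  comm := by
    intro k a c
    induction k using Submodule.Quotient.induction_on with
    | _ t =>
      rw [kSmul0_mk, kSmul1_mk, kSmul1_mk, kSmul0_mk]
      congr 1
      induction t with
      | zero => simp
      | tmul x y => rfl
      | add p q hp hq => rw [map_add, map_add, map_add, map_add, hp, hq]

/-- The universal general bilinear form `b_α : M × M → K_α`. -/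
noncomputable def balpha (α : Module.End Rᵐᵒᵖ M → Module.End Rᵐᵒᵖ M) :
    GBF R M (Kalpha α) (KalphaDM α) where
  b x y := Submodule.Quotient.mk (x ⊗ₜ[ℤ] y)
  add_left x x' y := by
    rw [TensorProduct.add_tmul, Submodule.Quotient.mk_add]
  add_right x y y' := by
    rw [TensorProduct.tmul_add, Submodule.Quotient.mk_add]
  smul_left x y r := by
    show _ = kSmul0 α r (Submodule.Quotient.mk (x ⊗ₜ[ℤ] y))
    rw [kSmul0_mk]
    congr 1
  smul_right x y r := by
    show _ = kSmul1 α r (Submodule.Quotient.mk (x ⊗ₜ[ℤ] y))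
    rw [kSmul1_mk]
    congr 1

end Kalpha

end Core

theorem DoubleModule.m1_zero {R : Type u} [Ring R] {K : Type w} [AddCommGroup K]
    (DK : DoubleModule R K) (r : R) : DK.m1 0 r = 0 := by
  have h := DK.m1_add_left 0 0 r
  rw [add_zero] at h
  exact left_eq_add.mp h

theorem DoubleModule.m1_zero_right {R : Type u} [Ring R] {K : Type w} [AddCommGroup K]
    (DK : DoubleModule R K) (k : K) : DK.m1 k 0 = 0 := by
  have h := DK.m1_add_right k 0 0
  rw [add_zero] at h
  exact left_eq_add.mp h

/-- The right `R`-module `K₁`: `K` regarded as a right `R`-module via the action `m1`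
of a double `R`-module structure. -/
def DoubleModule.mod1 {R : Type u} [Ring R] {K : Type w} [AddCommGroup K]
    (DK : DoubleModule R K) : Module Rᵐᵒᵖ K where
  smul r k := DK.m1 k r.unop
  one_smul k := DK.m1_one k
  mul_smul r s k := by
    show DK.m1 k (r * s).unop = DK.m1 (DK.m1 k s.unop) r.unop
    rw [MulOpposite.unop_mul, DK.m1_mul]
  smul_zero r := DK.m1_zero r.unop
  smul_add r k k' := DK.m1_add_left k k' r.unop
  add_smul r s k := by
    show DK.m1 k (r + s).unop = DK.m1 k r.unop + DK.m1 k s.unop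
    rw [MulOpposite.unop_add, DK.m1_add_right]
  zero_smul k := DK.m1_zero_right k

/-!
Writing `W = End_R(M)`, the relations of `K_α` say that `K_α = M ⊗_W M^α`, where the
second factor is the right `W`-module `y · w = α(w) y`. Since `M ≅ Rⁿ`, the left `W`-module
`Mⁿ` is `W` itself (a matrix is its `n` columns), so `(K_α)ⁿ ≅ W ⊗_W M^α ≅ M^α = M` as right
`R`-modules. Concretely, for a basis `b` of `M` with coordinate functions `cⱼ`, the `j`-th
component is `ψⱼ(x ⊗ y) = α(x cⱼ) y` with `x cⱼ : z ↦ x · cⱼ(z)`, and the inverse is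
`x ↦ (bᵢ ⊗ x)ᵢ`; the identity `∑ⱼ bⱼ cⱼ = 1` and `α 1 = 1` make them mutually inverse.
-/

open Module

namespace GBF

variable {R : Type u} [Ring R] {M : Type v} [AddCommGroup M] [Module Rᵐᵒᵖ M]
  {K : Type w} [AddCommGroup K] {DK : DoubleModule R K} (β : GBF R M K DK)

theorem map_zero_left (y : M) : β.b 0 y = 0 :=
  map_zero (AddMonoidHom.mk' (β.b · y) (β.add_left · · y))

theorem map_zero_right (x : M) : β.b x 0 = 0 :=
  map_zero (AddMonoidHom.mk' (β.b x) (β.add_right x))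

theorem map_sum_right (x : M) {ι : Type*} (s : Finset ι) (f : ι → M) :
    β.b x (∑ j ∈ s, f j) = ∑ j ∈ s, β.b x (f j) :=
  map_sum (AddMonoidHom.mk' (β.b x) (β.add_right x)) f s

end GBF

namespace Module.Basis

variable {S : Type*} [Semiring S] {N : Type*} [AddCommMonoid N] [Module S N] {ι : Type*}
  (b : Basis ι S N)

theorem sum_smulRight_coord_self [Fintype ι] : ∑ j, (b.coord j).smulRight (b j) = 1 := by
  ext x
  simp [LinearMap.sum_apply, b.sum_repr]

theorem smulRight_coord_apply_self [DecidableEq ι] (i j : ι) (x : N) :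
    (b.coord j).smulRight x (b i) = if i = j then x else 0 := by
  simp [Finsupp.single_apply]

end Module.Basis

namespace Kalpha

variable {R : Type u} [Ring R] {M : Type v} [AddCommGroup M] [Module Rᵐᵒᵖ M]
  {α : Module.End Rᵐᵒᵖ M → Module.End Rᵐᵒᵖ M}

theorem balpha_isAdjoint : (balpha α).IsAdjoint α := fun w x y =>
  (Submodule.Quotient.eq _).2 (Submodule.subset_span ⟨w, x, y, rfl⟩)

theorem induction_on {p : Kalpha α → Prop} (k : Kalpha α) (zero : p 0)
    (tmul : ∀ x y, p ((balpha α).b x y)) (add : ∀ k k', p k → p k' → p (k + k')) : p k := by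
  induction k using Submodule.Quotient.induction_on with
  | _ t =>
    induction t with
    | zero => exact zero
    | tmul x y => exact tmul x y
    | add t t' ht ht' => exact add _ _ ht ht'

noncomputable def lift {N : Type*} [AddCommGroup N] (f : M →+ M →+ N)
    (hf : ∀ w x y, f (w x) y = f x (α w y)) : Kalpha α →+ N :=
  ((kalphaRel α).liftQ (TensorProduct.liftAddHom f fun r x y => by simp).toIntLinearMap <| by
    rw [kalphaRel, Submodule.span_le]
    rintro _ ⟨w, x, y, rfl⟩
    simp [hf]).toAddMonoidHom

noncomputable local instance : Module Rᵐᵒᵖ (Kalpha α) := (KalphaDM α).mod1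

theorem op_smul_balpha (r : R) (x y : M) :
    op r • (balpha α).b x y = (balpha α).b x (op r • y) :=
  ((balpha α).smul_right x y r).symm

variable (hα : IsAntiEndo α) {ι : Type*} (b : Basis ι Rᵐᵒᵖ M)

noncomputable def coord (j : ι) : Kalpha α →+ M :=
  lift (AddMonoidHom.mk' (fun x => (α ((b.coord j).smulRight x)).toAddMonoidHom) fun x x' => by
      have hadd : (b.coord j).smulRight (x + x') =
          (b.coord j).smulRight x + (b.coord j).smulRight x' := by
        ext; simp [smul_add]
      ext y
      simp [hadd, hα.1])
    fun w x y => by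
      have hcomp : (b.coord j).smulRight (w x) = w * (b.coord j).smulRight x := by
        ext; simp
      simp [hcomp, hα.2.2]

theorem coord_balpha (j : ι) (x y : M) :
    coord hα b j ((balpha α).b x y) = α ((b.coord j).smulRight x) y := rfl

theorem coord_smul (j : ι) (r : Rᵐᵒᵖ) (k : Kalpha α) :
    coord hα b j (r • k) = r • coord hα b j k := by
  induction k using induction_on with
  | zero => simp
  | tmul x y => rw [← op_unop r, op_smul_balpha, coord_balpha, coord_balpha, map_smul]
  | add k k' hk hk' => simp only [smul_add, map_add, hk, hk']

theorem balpha_basis_coord [DecidableEq ι] (i j : ι) (k : Kalpha α) :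
    (balpha α).b (b i) (coord hα b j k) = if i = j then k else 0 := by
  induction k using induction_on with
  | zero => rw [map_zero, GBF.map_zero_right, ite_self]
  | tmul x y =>
    rw [coord_balpha, ← balpha_isAdjoint, b.smulRight_coord_apply_self]
    split_ifs
    · rfl
    · exact GBF.map_zero_left _ y
  | add k k' hk hk' =>
    rw [map_add, (balpha α).add_right, hk, hk']
    split_ifs <;> simp

theorem sum_coord_balpha_basis [Fintype ι] (x : M) :
    ∑ j, coord hα b j ((balpha α).b (b j) x) = x := by
  have hsum : ∑ j, α ((b.coord j).smulRight (b j)) = 1 :=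
    calc ∑ j, α ((b.coord j).smulRight (b j))
        = α (∑ j, (b.coord j).smulRight (b j)) := (map_sum (AddMonoidHom.mk' α hα.1) _ _).symm
      _ = 1 := by rw [b.sum_smulRight_coord_self, hα.2.1]
  simp only [coord_balpha, ← LinearMap.sum_apply, hsum, Module.End.one_apply]

noncomputable def piEquiv [Fintype ι] : (ι → Kalpha α) ≃ₗ[Rᵐᵒᵖ] M where
  toFun k := ∑ j, coord hα b j (k j)
  invFun x i := (balpha α).b (b i) x
  map_add' k k' := by simp [Finset.sum_add_distrib]
  map_smul' r k := by simp [coord_smul, Finset.smul_sum]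
  left_inv k := by
    classical
    funext i
    simp [GBF.map_sum_right, balpha_basis_coord]
  right_inv := sum_coord_balpha_basis hα b

end Kalpha

theorem stmt_16_general {R : Type u} [Ring R] {M : Type v} [AddCommGroup M] [Module Rᵐᵒᵖ M]
    (n : ℕ) (e : M ≃ₗ[Rᵐᵒᵖ] (Fin n → R))
    (α : Module.End Rᵐᵒᵖ M → Module.End Rᵐᵒᵖ M) (hα : IsAntiEndo α) :
    letI : Module Rᵐᵒᵖ (Kalpha (M := M) α) := (KalphaDM α).mod1
    Nonempty ((Fin n → Kalpha (M := M) α) ≃ₗ[Rᵐᵒᵖ] (Fin n → R)) :=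
  let b := Basis.ofEquivFun (e.trans (LinearEquiv.piCongrRight fun _ => opLinearEquiv Rᵐᵒᵖ))
  ⟨(Kalpha.piEquiv hα b).trans e⟩

/-- If `M ≅ Rⁿ` is free of rank `n` and `α` is an anti-endomorphism of
`End_R(M)`, then `((K_α)₁)ⁿ ≅ Rⁿ` as right `R`-modules. -/
theorem stmt_16 {R : Type u} [Ring R] {M : Type v} [AddCommGroup M] [Module Rᵐᵒᵖ M]
    (n : ℕ) (hn : 1 ≤ n) (e : M ≃ₗ[Rᵐᵒᵖ] (Fin n → R))
    (α : Module.End Rᵐᵒᵖ M → Module.End Rᵐᵒᵖ M) (hα : IsAntiEndo α) :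
    letI : Module Rᵐᵒᵖ (Kalpha (M := M) α) := (KalphaDM α).mod1
    Nonempty ((Fin n → Kalpha (M := M) α) ≃ₗ[Rᵐᵒᵖ] (Fin n → R)) :=
  stmt_16_general n e α hα
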